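/- Let R be a commutative ring, let M and N be finitely generated projective R-modules, and let d ≥ 0. Then the natural R-linear map S^d(M^*) ⊗_R N → P^d(M, N), sending (λ_1 · λ_2 · ⋯ · λ_d) ⊗ n (for λ_i ∈ M^* = Hom_R(M,R) and n ∈ N) to the homogeneous degree-d polynomial law whose value at x ∈ M ⊗_R S is (∏_{i=1}^d (λ_i ⊗ id_S)(x)) • (n ⊗ 1), is an isomorphism of R-modules. -/

import Mathlib

open TensorProduct

universe u

variable (R : Type u) [CommRing R]

/-- The type of families of functions `S ⊗[R] M → S ⊗[R] N`, one for each commutative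
`R`-algebra `S` (no naturality required). -/
abbrev RawLaw (M N : Type u) [AddCommGroup M] [Module R M] [AddCommGroup N] [Module R N] :
    Type (u + 1) :=
  ∀ (S : Type u) [CommRing S] [Algebra R S], S ⊗[R] M → S ⊗[R] N

variable (M N : Type u) [AddCommGroup M] [Module R M] [AddCommGroup N] [Module R N]

/-- Naturality: such a family is a polynomial law (in the sense of Roby) if it commutes
with the maps induced by every `R`-algebra homomorphism. -/
def IsPolyLaw (f : RawLaw R M N) : Prop :=
  ∀ (S S' : Type u) [CommRing S] [Algebra R S] [CommRing S'] [Algebra R S']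
    (φ : S →ₐ[R] S') (x : S ⊗[R] M),
    LinearMap.rTensor N φ.toLinearMap (f S x) = f S' (LinearMap.rTensor M φ.toLinearMap x)

/-- Homogeneity of degree `d`. -/
def IsHomog (d : ℕ) (f : RawLaw R M N) : Prop :=
  ∀ (S : Type u) [CommRing S] [Algebra R S] (s : S) (x : S ⊗[R] M),
    f S (s • x) = s ^ d • f S x

/-- The `R`-module `P^d(M, N)` of polynomial laws from `M` to `N` homogeneous of
degree `d`, as a submodule of the module of raw families. -/
noncomputable def polyLawHomog (d : ℕ) : Submodule R (RawLaw R M N) where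
  carrier := {f | IsPolyLaw R M N f ∧ IsHomog R M N d f}
  add_mem' := by
    rintro f g ⟨hf1, hf2⟩ ⟨hg1, hg2⟩
    constructor
    · intro S S' _ _ _ _ φ x
      show LinearMap.rTensor N φ.toLinearMap (f S x + g S x)
          = f S' (LinearMap.rTensor M φ.toLinearMap x) + g S' (LinearMap.rTensor M φ.toLinearMap x)
      rw [map_add, hf1 S S' φ x, hg1 S S' φ x]
    · intro S _ _ s xx
      show f S (s • xx) + g S (s • xx) = s ^ d • (f S xx + g S xx)
      rw [hf2 S s xx, hg2 S s xx, smul_add]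
  zero_mem' := by
    constructor
    · intro S S' _ _ _ _ φ x
      show LinearMap.rTensor N φ.toLinearMap 0 = (0 : S' ⊗[R] N)
      rw [map_zero]
    · intro S _ _ s xx
      show (0 : S ⊗[R] N) = s ^ d • (0 : S ⊗[R] N)
      rw [smul_zero]
  smul_mem' := by
    rintro r f ⟨hf1, hf2⟩
    constructor
    · intro S S' _ _ _ _ φ x
      show LinearMap.rTensor N φ.toLinearMap (r • f S x)
          = r • f S' (LinearMap.rTensor M φ.toLinearMap x)
      rw [map_smul, hf1 S S' φ x]
    · intro S _ _ s xx
      show r • f S (s • xx) = s ^ d • (r • f S xx)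
      rw [hf2 S s xx, smul_comm]

open PiTensorProduct in
/-- The submodule of the `d`-th tensor power generated by the elements `x - σ x`,
for `σ` a permutation of the `d` factors. -/
noncomputable def symRel (P : Type u) [AddCommGroup P] [Module R P] (d : ℕ) :
    Submodule R (⨂[R] (_ : Fin d), P) :=
  Submodule.span R {x | ∃ (σ : Equiv.Perm (Fin d)) (y : ⨂[R] (_ : Fin d), P),
    x = y - (PiTensorProduct.reindex R (fun _ : Fin d => P) σ) y}

/-- The `d`-th symmetric power of a module: the quotient of the `d`-th tensor power by
the submodule generated by the elements `x - σ x`. -/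
abbrev SymPow (P : Type u) [AddCommGroup P] [Module R P] (d : ℕ) : Type u :=
  (⨂[R] (_ : Fin d), P) ⧸ symRel R P d

/-!
STATEMENT 5: Let R be a commutative ring, let M and N be finitely generated projective
R-modules, and let d ≥ 0.  Then the natural R-linear map S^d(M^*) ⊗_R N → P^d(M, N),
sending (λ_1 ⋯ λ_d) ⊗ n to the homogeneous degree-d polynomial law whose value at
x ∈ M ⊗_R S is (∏_i (λ_i ⊗ id_S)(x)) • (n ⊗ 1), is an isomorphism of R-modules.
(Formalized: there is an `R`-linear map with these values on pure tensors, it is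
injective, and its range is exactly `P^d(M, N)`.) -/


/-!
Write `x = ∑ⱼ εⱼ(x) mⱼ` on `M` with finitely many `mⱼ ∈ M`, `εⱼ ∈ M^*` (possible as `M` is
finite projective), and let `u = ∑ⱼ Xⱼ ⊗ mⱼ ∈ R[X] ⊗ M` be the generic element. Every
`x ∈ S ⊗ M` is the image of `u` under `Xⱼ ↦ εⱼ(x)`, so by naturality a polynomial law `f` is
determined by `f(u) ∈ R[X] ⊗ N`. The law attached to `ξ ∈ S^d(M^*) ⊗ N` takes at `u` the image
of `ξ` under `λ₁⋯λ_d ↦ ∏ᵢ ∑ⱼ λᵢ(mⱼ) Xⱼ`, and `X_{a₁}⋯X_{a_d} ↦ ε_{a₁}⋯ε_{a_d}` is a left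
inverse of that map: this gives injectivity. Conversely, if `f` is homogeneous of degree `d`,
comparing `f` at `u` and at `T • u` over `R[X][T]` shows that `f(u)` is homogeneous of degree
`d`; on such polynomials the left inverse followed by the map is the substitution
`Xⱼ ↦ ∑ᵢ εⱼ(mᵢ) Xᵢ`, which fixes `u` and hence `f(u)`.
-/

open PiTensorProduct

namespace SymPow

variable {R} {P Q : Type u} [AddCommGroup P] [Module R P] [AddCommGroup Q] [Module R Q] {d : ℕ}

lemma mk_tprod_comp_perm (f : Fin d → P) (σ : Equiv.Perm (Fin d)) :
    (Submodule.Quotient.mk (tprod R (f ∘ σ)) : SymPow R P d) =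
      Submodule.Quotient.mk (tprod R f) := by
  rw [Submodule.Quotient.eq]
  exact Submodule.subset_span ⟨σ, tprod R (f ∘ σ), by simp [Function.comp_def]⟩

lemma ext {F G : SymPow R P d →ₗ[R] Q}
    (h : ∀ f : Fin d → P,
      F (Submodule.Quotient.mk (tprod R f)) = G (Submodule.Quotient.mk (tprod R f))) :
    F = G :=
  Submodule.linearMap_qext _ (PiTensorProduct.ext (MultilinearMap.ext h))

noncomputable def lift (φ : MultilinearMap R (fun _ : Fin d => P) Q)
    (hφ : ∀ (f : Fin d → P) (σ : Equiv.Perm (Fin d)), φ (f ∘ σ) = φ f) :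
    SymPow R P d →ₗ[R] Q :=
  (symRel R P d).liftQ (PiTensorProduct.lift φ) <| by
    rw [symRel, Submodule.span_le]
    rintro _ ⟨σ, y, rfl⟩
    suffices PiTensorProduct.lift φ ∘ₗ (reindex R (fun _ => P) σ).toLinearMap =
        PiTensorProduct.lift φ by
      simp [← LinearMap.congr_fun this y]
    ext f
    simpa [Function.comp_def] using hφ f σ.symm

@[simp]
lemma lift_mk_tprod (φ : MultilinearMap R (fun _ : Fin d => P) Q) (hφ) (f : Fin d → P) :
    lift φ hφ (Submodule.Quotient.mk (tprod R f)) = φ f := by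
  rw [lift, Submodule.liftQ_apply, PiTensorProduct.lift.tprod]

variable {A : Type u} [CommRing A] [Algebra R A]

noncomputable def prod (L : P →ₗ[R] A) : SymPow R P d →ₗ[R] A :=
  lift ((MultilinearMap.mkPiAlgebra R (Fin d) A).compLinearMap fun _ => L) fun f σ => by
    simpa using Equiv.prod_comp σ fun i => L (f i)

@[simp]
lemma prod_mk_tprod (L : P →ₗ[R] A) (f : Fin d → P) :
    prod L (Submodule.Quotient.mk (tprod R f) : SymPow R P d) = ∏ i, L (f i) := by
  simp [prod]

lemma algHom_comp_prod {B : Type u} [CommRing B] [Algebra R B] (φ : A →ₐ[R] B) (L : P →ₗ[R] A) :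
    φ.toLinearMap ∘ₗ prod (d := d) L = prod (φ.toLinearMap ∘ₗ L) :=
  SymPow.ext fun f => by simp

lemma prod_mulLeft_comp (a : A) (L : P →ₗ[R] A) :
    prod (d := d) (LinearMap.mulLeft R a ∘ₗ L) = LinearMap.mulLeft R (a ^ d) ∘ₗ prod L :=
  SymPow.ext fun f => by simp [Finset.prod_mul_distrib]

end SymPow

section TupleCount

variable {ι : Type*} {d : ℕ}

noncomputable def tupleCount (a : Fin d → ι) : ι →₀ ℕ :=
  ∑ i, Finsupp.single (a i) 1

lemma tupleCount_apply [DecidableEq ι] (a : Fin d → ι) (j : ι) :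
    tupleCount a j = Fintype.card {i // a i = j} := by
  simp [tupleCount, Finsupp.finsetSum_apply, Finsupp.single_apply, Fintype.card_subtype]

lemma toMultiset_tupleCount (a : Fin d → ι) :
    Finsupp.toMultiset (tupleCount a) = Multiset.map a Finset.univ.val := by
  simp only [tupleCount, map_sum, Finsupp.toMultiset_single, one_smul]
  rw [Finset.sum_eq_multiset_sum, ← Multiset.sum_map_singleton (Multiset.map a _), Multiset.map_map]
  rfl

lemma exists_tupleCount_eq {k : ι →₀ ℕ} (hk : k.degree = d) :
    ∃ a : Fin d → ι, tupleCount a = k := by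
  classical
  set l := (Finsupp.toMultiset k).toList
  have hl : l.length = d := by
    rw [Multiset.length_toList, Finsupp.card_toMultiset, ← hk]
    rfl
  rw [← hl]
  refine ⟨l.get, Finsupp.orderIsoMultiset.injective ?_⟩
  rw [Finsupp.coe_orderIsoMultiset, toMultiset_tupleCount, Fin.univ_val_map, List.ofFn_get,
    Multiset.coe_toList]

lemma exists_perm_of_tupleCount_eq [DecidableEq ι] {a b : Fin d → ι}
    (h : tupleCount a = tupleCount b) : ∃ σ : Equiv.Perm (Fin d), a = b ∘ σ := by
  have hcard (j : ι) : Fintype.card {i // a i = j} = Fintype.card {i // b i = j} := by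
    rw [← tupleCount_apply, ← tupleCount_apply, h]
  refine ⟨Equiv.ofFiberEquiv fun j => Fintype.equivOfCardEq (hcard j), ?_⟩
  funext i
  exact (Equiv.ofFiberEquiv_map _ i).symm

lemma prod_X_eq_monomial_tupleCount {R : Type*} [CommSemiring R] (a : Fin d → ι) :
    ∏ i, (MvPolynomial.X (a i) : MvPolynomial ι R) = MvPolynomial.monomial (tupleCount a) 1 := by
  simp [tupleCount, MvPolynomial.monomial_sum_one, MvPolynomial.X]

end TupleCount

section MonomialsToSymPow

open MvPolynomial

variable {R} {P : Type u} [AddCommGroup P] [Module R P] {ι : Type*} {d : ℕ}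

variable (R) in
noncomputable def symMonomial (v : ι → P) (d : ℕ) (k : ι →₀ ℕ) : SymPow R P d :=
  open Classical in
  if h : ∃ a : Fin d → ι, tupleCount a = k then Submodule.Quotient.mk (tprod R (v ∘ h.choose))
  else 0

lemma symMonomial_tupleCount (v : ι → P) (a : Fin d → ι) :
    symMonomial R v d (tupleCount a) = Submodule.Quotient.mk (tprod R (v ∘ a)) := by
  classical
  have h : ∃ b : Fin d → ι, tupleCount b = tupleCount a := ⟨a, rfl⟩
  rw [symMonomial, dif_pos h]
  obtain ⟨σ, hσ⟩ := exists_perm_of_tupleCount_eq h.choose_spec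
  rw [hσ, ← Function.comp_assoc, SymPow.mk_tprod_comp_perm]

variable (R) in
noncomputable def monomialsToSymPow (v : ι → P) (d : ℕ) : MvPolynomial ι R →ₗ[R] SymPow R P d :=
  (basisMonomials ι R).constr R (symMonomial R v d)

lemma monomialsToSymPow_monomial (v : ι → P) (k : ι →₀ ℕ) :
    monomialsToSymPow R v d (monomial k (1 : R)) = symMonomial R v d k := by
  simpa [monomialsToSymPow] using (basisMonomials ι R).constr_basis R (symMonomial R v d) k

lemma monomialsToSymPow_prod_X (v : ι → P) (a : Fin d → ι) :
    monomialsToSymPow R v d (∏ i, X (a i) : MvPolynomial ι R) =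
      Submodule.Quotient.mk (tprod R (v ∘ a)) := by
  rw [prod_X_eq_monomial_tupleCount, monomialsToSymPow_monomial, symMonomial_tupleCount]

lemma monomialsToSymPow_prod_sum_smul_X [Fintype ι] (v : ι → P) (c : Fin d → ι → R) :
    monomialsToSymPow R v d (∏ i, ∑ j, c i j • X j : MvPolynomial ι R) =
      Submodule.Quotient.mk (tprod R fun i => ∑ j, c i j • v j) := by
  rw [Fintype.prod_sum, MultilinearMap.map_sum, map_sum, ← Submodule.mkQ_apply, map_sum]
  refine Fintype.sum_congr _ _ fun a => ?_
  rw [Finset.prod_smul, map_smul, monomialsToSymPow_prod_X, MultilinearMap.map_smul_univ, map_smul]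
  rfl

variable {A : Type u} [CommRing A] [Algebra R A]

lemma prod_comp_monomialsToSymPow_comp_homogeneousComponent (L : P →ₗ[R] A) (v : ι → P) :
    SymPow.prod L ∘ₗ monomialsToSymPow R v d ∘ₗ homogeneousComponent d =
      (aeval (L ∘ v)).toLinearMap ∘ₗ homogeneousComponent d := by
  refine (basisMonomials ι R).ext fun k => ?_
  simp only [LinearMap.comp_apply, coe_basisMonomials,
    homogeneousComponent_of_mem (isHomogeneous_monomial (1 : R) rfl)]
  split_ifs with hk
  · obtain ⟨a, rfl⟩ := exists_tupleCount_eq hk.symm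
    rw [← prod_X_eq_monomial_tupleCount, monomialsToSymPow_prod_X, SymPow.prod_mk_tprod]
    simp
  · simp

end MonomialsToSymPow

section ScalingVariable

open MvPolynomial

variable {A : Type*} [CommRing A]

lemma lcoeff_comp_aeval_C_X_mul_X {ι : Type*} (n : ℕ) :
    (Polynomial.lcoeff (MvPolynomial ι R) n).restrictScalars R ∘ₗ
      (aeval fun j => Polynomial.C (X j) * Polynomial.X).toLinearMap = homogeneousComponent n := by
  refine (basisMonomials ι R).ext fun k => ?_
  have hmonomial : aeval (fun j => Polynomial.C (X j : MvPolynomial ι R) * Polynomial.X)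
      (monomial k (1 : R)) = Polynomial.C (monomial k 1) * Polynomial.X ^ k.degree := by
    rw [aeval_monomial, map_one, one_mul, Finsupp.prod]
    simp only [mul_pow, Finset.prod_mul_distrib, ← map_pow, ← map_prod, prod_X_pow_eq_monomial,
      Finset.prod_pow_eq_pow_sum, Finsupp.degree_apply]
  simp only [LinearMap.comp_apply, coe_basisMonomials, AlgHom.toLinearMap_apply, hmonomial,
    LinearMap.restrictScalars_apply, Polynomial.lcoeff_apply, Polynomial.coeff_C_mul_X_pow,
    homogeneousComponent_of_mem (isHomogeneous_monomial (1 : R) rfl)]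

lemma lcoeff_comp_mulLeft_X_pow_comp_C [Algebra R A] (n : ℕ) :
    (Polynomial.lcoeff A n).restrictScalars R ∘ₗ LinearMap.mulLeft R (Polynomial.X ^ n) ∘ₗ
      (IsScalarTower.toAlgHom R A (Polynomial A)).toLinearMap = LinearMap.id := by
  ext p
  simp

end ScalingVariable

lemma Module.exists_sum_smul_eq_self [Module.Finite R M] [Module.Projective R M] :
    ∃ (n : ℕ) (m : Fin n → M) (ε : Fin n → Module.Dual R M), ∀ x, ∑ j, ε j x • m j = x := by
  obtain ⟨n, g, s, -, -, hgs⟩ := Module.Finite.exists_comp_eq_id_of_projective R M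
  refine ⟨n, fun j => g (Pi.single j 1), fun j => LinearMap.proj j ∘ₗ s, fun x => ?_⟩
  simp only [LinearMap.comp_apply, LinearMap.proj_apply, ← map_smul, ← map_sum]
  rw [← pi_eq_sum_univ', ← LinearMap.comp_apply, hgs, LinearMap.id_apply]

section DualBasis

variable {R M} {ι : Type*} [Fintype ι] {m : ι → M} {ε : ι → Module.Dual R M}

lemma Module.Dual.sum_apply_smul_eq_self (hdual : ∀ x : M, ∑ j, ε j x • m j = x)
    (lam : Module.Dual R M) : ∑ j, lam (m j) • ε j = lam := by
  ext x
  conv_rhs => rw [← hdual x]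
  simp [map_sum, mul_comm]

end DualBasis

section SymPowTensorToLaw

variable {R M N}

noncomputable def evalDual (S : Type u) [CommRing S] [Algebra R S] (x : S ⊗[R] M) :
    Module.Dual R M →ₗ[R] S where
  toFun lam := TensorProduct.rid R S (LinearMap.lTensor S lam x)
  map_add' f g := by simp [LinearMap.lTensor_add]
  map_smul' c f := by simp [LinearMap.lTensor_smul]

variable {S S' : Type u} [CommRing S] [Algebra R S] [CommRing S'] [Algebra R S']

lemma evalDual_apply (x : S ⊗[R] M) (lam : Module.Dual R M) :
    evalDual S x lam = TensorProduct.rid R S (LinearMap.lTensor S lam x) :=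
  rfl

lemma algHom_comp_evalDual (φ : S →ₐ[R] S') (x : S ⊗[R] M) :
    φ.toLinearMap ∘ₗ evalDual S x = evalDual S' (LinearMap.rTensor M φ.toLinearMap x) := by
  ext lam
  simp only [LinearMap.comp_apply, evalDual_apply]
  induction x using TensorProduct.induction_on with
  | zero => simp
  | tmul s m => simp
  | add x y hx hy => simp_all

lemma evalDual_smul (s : S) (x : S ⊗[R] M) :
    evalDual S (s • x) = LinearMap.mulLeft R s ∘ₗ evalDual S x := by
  ext lam
  simp only [LinearMap.comp_apply, evalDual_apply]
  induction x using TensorProduct.induction_on with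
  | zero => simp
  | tmul t m => simp [TensorProduct.smul_tmul']
  | add x y hx hy => simp_all [mul_add]

lemma rTensor_mulLeft_apply (s : S) (z : S ⊗[R] N) :
    LinearMap.rTensor N (LinearMap.mulLeft R s) z = s • z := by
  induction z using TensorProduct.induction_on with
  | zero => simp
  | tmul t n => simp [TensorProduct.smul_tmul']
  | add y z hy hz => simp_all

variable (R M N) in
noncomputable def symPowTensorToLaw (d : ℕ) :
    SymPow R (Module.Dual R M) d ⊗[R] N →ₗ[R] RawLaw R M N where
  toFun ξ S _ _ x := LinearMap.rTensor N (SymPow.prod (evalDual S x)) ξ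
  map_add' ξ η := by
    funext S _ _ x
    exact map_add _ ξ η
  map_smul' r ξ := by
    funext S _ _ x
    exact map_smul _ r ξ

variable {d : ℕ}

lemma symPowTensorToLaw_apply (ξ : SymPow R (Module.Dual R M) d ⊗[R] N) (x : S ⊗[R] M) :
    symPowTensorToLaw R M N d ξ S x = LinearMap.rTensor N (SymPow.prod (evalDual S x)) ξ :=
  rfl

lemma symPowTensorToLaw_mk_tprod_tmul (lam : Fin d → Module.Dual R M) (n : N) (x : S ⊗[R] M) :
    symPowTensorToLaw R M N d (Submodule.Quotient.mk (PiTensorProduct.tprod R lam) ⊗ₜ[R] n) S x =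
      (∏ i, TensorProduct.rid R S (LinearMap.lTensor S (lam i) x)) • ((1 : S) ⊗ₜ[R] n) := by
  rw [symPowTensorToLaw_apply, LinearMap.rTensor_tmul, SymPow.prod_mk_tprod,
    TensorProduct.smul_tmul', smul_eq_mul, mul_one]
  rfl

lemma symPowTensorToLaw_mem (ξ : SymPow R (Module.Dual R M) d ⊗[R] N) :
    symPowTensorToLaw R M N d ξ ∈ polyLawHomog R M N d := by
  constructor
  · intro S S' _ _ _ _ φ x
    simp only [symPowTensorToLaw_apply, ← LinearMap.comp_apply, ← LinearMap.rTensor_comp,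
      SymPow.algHom_comp_prod, algHom_comp_evalDual]
  · intro S _ _ s x
    simp only [symPowTensorToLaw_apply, evalDual_smul, SymPow.prod_mulLeft_comp,
      LinearMap.rTensor_comp, LinearMap.comp_apply, rTensor_mulLeft_apply]

end SymPowTensorToLaw

section GenericElement

open MvPolynomial

variable {R M N} {ι : Type} [Fintype ι] {S : Type u} [CommRing S] [Algebra R S]

variable (R) in
noncomputable def genericElement (m : ι → M) : MvPolynomial ι R ⊗[R] M :=
  ∑ j, X j ⊗ₜ[R] m j

lemma evalDual_genericElement (m : ι → M) (lam : Module.Dual R M) :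
    evalDual _ (genericElement R m) lam = ∑ j, lam (m j) • X j := by
  simp [genericElement, evalDual_apply, map_sum]

lemma rTensor_genericElement (m : ι → M) (φ : MvPolynomial ι R →ₐ[R] S) :
    LinearMap.rTensor M φ.toLinearMap (genericElement R m) = ∑ j, φ (X j) ⊗ₜ[R] m j := by
  simp [genericElement, map_sum]

variable {m : ι → M} {ε : ι → Module.Dual R M}

lemma rTensor_aeval_evalDual_genericElement (hdual : ∀ x : M, ∑ j, ε j x • m j = x)
    (x : S ⊗[R] M) :
    LinearMap.rTensor M (aeval (evalDual S x ∘ ε)).toLinearMap (genericElement R m) = x := by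
  simp only [rTensor_genericElement, aeval_X, Function.comp_apply, evalDual_apply]
  induction x using TensorProduct.induction_on with
  | zero => simp
  | tmul s y =>
    simp only [LinearMap.lTensor_tmul, TensorProduct.rid_tmul, TensorProduct.smul_tmul]
    rw [← TensorProduct.tmul_sum, hdual]
  | add x y hx hy => simp [TensorProduct.add_tmul, Finset.sum_add_distrib, hx, hy]

end GenericElement

section PolyLaw

open MvPolynomial

variable {R M N} {ι : Type} [Fintype ι] {m : ι → M} {ε : ι → Module.Dual R M}
  {f g : RawLaw R M N} {d : ℕ}

namespace IsPolyLaw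

lemma apply_eq_rTensor_aeval (hf : IsPolyLaw R M N f) (hdual : ∀ x : M, ∑ j, ε j x • m j = x)
    {S : Type u} [CommRing S] [Algebra R S] (x : S ⊗[R] M) :
    f S x = LinearMap.rTensor N (aeval (evalDual S x ∘ ε)).toLinearMap
      (f (MvPolynomial ι R) (genericElement R m)) := by
  rw [hf, rTensor_aeval_evalDual_genericElement hdual]

lemma ext_genericElement (hf : IsPolyLaw R M N f) (hg : IsPolyLaw R M N g)
    (hdual : ∀ x : M, ∑ j, ε j x • m j = x)
    (h : f (MvPolynomial ι R) (genericElement R m) = g _ (genericElement R m)) : f = g := by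
  funext S _ _ x
  rw [hf.apply_eq_rTensor_aeval hdual, hg.apply_eq_rTensor_aeval hdual, h]

lemma rTensor_homogeneousComponent_genericElement (hf : IsPolyLaw R M N f)
    (hh : IsHomog R M N d f) :
    LinearMap.rTensor N (homogeneousComponent d) (f (MvPolynomial ι R) (genericElement R m)) =
      f _ (genericElement R m) := by
  set A := MvPolynomial ι R
  set u := genericElement R m
  set scale : A →ₐ[R] Polynomial A := aeval fun j => Polynomial.C (X j) * Polynomial.X
  set const := IsScalarTower.toAlgHom R A (Polynomial A)
  set lcoeff := (Polynomial.lcoeff A d).restrictScalars R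
  -- Over `A[T]`, `scale` substitutes `T Xⱼ` for `Xⱼ`, so the coefficient of `T^d` in `scale p` is
  -- the degree `d` component of `p`; homogeneity of `f` gives `scale (f u) = T^d • f u`.
  have hscale : LinearMap.rTensor M scale.toLinearMap u =
      (Polynomial.X : Polynomial A) • LinearMap.rTensor M const.toLinearMap u := by
    rw [rTensor_genericElement, rTensor_genericElement, Finset.smul_sum]
    refine Finset.sum_congr rfl fun j _ => ?_
    rw [TensorProduct.smul_tmul', smul_eq_mul]
    congr 1
    simp only [scale, const, aeval_X]
    exact mul_comm _ _
  calc LinearMap.rTensor N (homogeneousComponent d) (f A u)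
      = LinearMap.rTensor N lcoeff (LinearMap.rTensor N scale.toLinearMap (f A u)) := by
        rw [← lcoeff_comp_aeval_C_X_mul_X, LinearMap.rTensor_comp, LinearMap.comp_apply]
    _ = LinearMap.rTensor N lcoeff
          (Polynomial.X ^ d • LinearMap.rTensor N const.toLinearMap (f A u)) := by
        rw [hf, hscale, hh, hf]
    _ = f A u := by
        have hid := lcoeff_comp_mulLeft_X_pow_comp_C (R := R) (A := A) d
        simpa only [LinearMap.rTensor_comp, LinearMap.comp_apply, rTensor_mulLeft_apply,
          LinearMap.rTensor_id, LinearMap.id_apply] using congr(LinearMap.rTensor N $hid (f A u))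

end IsPolyLaw

lemma monomialsToSymPow_comp_prod_evalDual_genericElement
    (hdual : ∀ x : M, ∑ j, ε j x • m j = x) :
    monomialsToSymPow R ε d ∘ₗ SymPow.prod (evalDual (MvPolynomial ι R) (genericElement R m)) =
      LinearMap.id := by
  refine SymPow.ext fun lam => ?_
  simp only [LinearMap.comp_apply, SymPow.prod_mk_tprod, evalDual_genericElement,
    monomialsToSymPow_prod_sum_smul_X, Module.Dual.sum_apply_smul_eq_self hdual, LinearMap.id_apply]

lemma symPowTensorToLaw_injective (hdual : ∀ x : M, ∑ j, ε j x • m j = x) :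
    Function.Injective (symPowTensorToLaw R M N d) := by
  intro ξ η h
  have hleft (ζ : SymPow R (Module.Dual R M) d ⊗[R] N) :
      LinearMap.rTensor N (monomialsToSymPow R ε d)
        (symPowTensorToLaw R M N d ζ (MvPolynomial ι R) (genericElement R m)) = ζ := by
    rw [symPowTensorToLaw_apply, ← LinearMap.comp_apply, ← LinearMap.rTensor_comp,
      monomialsToSymPow_comp_prod_evalDual_genericElement hdual, LinearMap.rTensor_id,
      LinearMap.id_apply]
  rw [← hleft ξ, ← hleft η, h]

lemma symPowTensorToLaw_rTensor_monomialsToSymPow (hdual : ∀ x : M, ∑ j, ε j x • m j = x)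
    (hf : f ∈ polyLawHomog R M N d) :
    symPowTensorToLaw R M N d
      (LinearMap.rTensor N (monomialsToSymPow R ε d) (f _ (genericElement R m))) = f := by
  obtain ⟨hnat, hhom⟩ := hf
  refine (symPowTensorToLaw_mem _).1.ext_genericElement hnat hdual ?_
  set u := genericElement R m
  set c := f _ u
  have hfixed : LinearMap.rTensor N (aeval (evalDual _ u ∘ ε)).toLinearMap c = c := by
    rw [hnat, rTensor_aeval_evalDual_genericElement hdual]
  calc symPowTensorToLaw R M N d (LinearMap.rTensor N (monomialsToSymPow R ε d) c) _ u
      = LinearMap.rTensor N (SymPow.prod (evalDual _ u) ∘ₗ monomialsToSymPow R ε d ∘ₗ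
          homogeneousComponent d) c := by
        rw [LinearMap.rTensor_comp, LinearMap.rTensor_comp, LinearMap.comp_apply,
          LinearMap.comp_apply, hnat.rTensor_homogeneousComponent_genericElement hhom]
        rfl
    _ = LinearMap.rTensor N
          ((aeval (evalDual _ u ∘ ε)).toLinearMap ∘ₗ homogeneousComponent d) c := by
        rw [prod_comp_monomialsToSymPow_comp_homogeneousComponent]
    _ = c := by
        rw [LinearMap.rTensor_comp, LinearMap.comp_apply,
          hnat.rTensor_homogeneousComponent_genericElement hhom, hfixed]

end PolyLaw

theorem stmt_5 [Module.Finite R M] [Module.Projective R M] (d : ℕ) :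
    ∃ Φ : (SymPow R (Module.Dual R M) d) ⊗[R] N →ₗ[R] RawLaw R M N,
      (∀ (lam : Fin d → Module.Dual R M) (nn : N)
        (S : Type u) [CommRing S] [Algebra R S] (x : S ⊗[R] M),
        Φ ((Submodule.Quotient.mk (PiTensorProduct.tprod R lam)) ⊗ₜ[R] nn) S x
          = (∏ i, TensorProduct.rid R S (LinearMap.lTensor S (lam i) x)) • ((1 : S) ⊗ₜ[R] nn)) ∧
      Function.Injective Φ ∧
      Set.range Φ = ↑(polyLawHomog R M N d) := by
  obtain ⟨n, m, ε, hdual⟩ := Module.exists_sum_smul_eq_self R M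
  refine ⟨symPowTensorToLaw R M N d,
    fun lam nn S _ _ x => symPowTensorToLaw_mk_tprod_tmul lam nn x,
    symPowTensorToLaw_injective hdual, Set.ext fun f => ⟨?_, fun hf => ?_⟩⟩
  · rintro ⟨ξ, rfl⟩
    exact symPowTensorToLaw_mem ξ
  · exact ⟨_, symPowTensorToLaw_rTensor_monomialsToSymPow hdual hf⟩
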